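/- Let l and m be natural numbers with m < l and l−m even. Then for every real x with x² ≠ 1, 𝒫_{l−m−1}(x,l) = (N_l^m / ((l−m)(l+m+1))) · 𝒫_l^{m+1}(x), where N_l^m = (−1)^m · binom(l, (l−m)/2) · (l−m)!!·(l−m)!/(l+m−1)!! (with the convention (−1)!! = 1) and 𝒫_l^{m+1}(x) = (−1)^{m+1} · (d^{m+1}/dx^{m+1}) P_l(x). -/

import Mathlib

/-- Complementary Legendre polynomial
`𝒫_ν(x,l) = (1-x²)^(ν-l) · (dᵛ/dtᵛ)(1-t²)^l |_{t=x}` (zpow power). -/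
noncomputable def complLegendre (l ν : ℕ) (x : ℝ) : ℝ :=
  (1 - x ^ 2) ^ ((ν : ℤ) - (l : ℤ)) *
    iteratedDeriv ν (fun t : ℝ => (1 - t ^ 2) ^ l) x

/-- Legendre polynomial via Rodrigues' formula. -/
noncomputable def legendreP (l : ℕ) (x : ℝ) : ℝ :=
  (1 / (2 ^ l * (Nat.factorial l : ℝ))) *
    iteratedDeriv l (fun t : ℝ => (t ^ 2 - 1) ^ l) x

/-- Polynomial part of the associated Legendre function:
`𝒫_l^m(x) = (-1)^m (d^m/dx^m) P_l(x)`. -/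
noncomputable def assocLegendreP (l m : ℕ) (x : ℝ) : ℝ :=
  (-1) ^ m * iteratedDeriv m (legendreP l) x

/-- Normalization `N_l^m` (here `(l+m-1)` is natural subtraction, so that for
`l = m = 0` the denominator is `0‼ = 1`, matching the convention `(-1)‼ = 1`). -/
noncomputable def legendreNorm (l m : ℕ) : ℝ :=
  (-1) ^ m * (Nat.choose l ((l - m) / 2) : ℝ) *
    ((Nat.doubleFactorial (l - m) : ℝ) * (Nat.factorial (l - m) : ℝ))
      / (Nat.doubleFactorial (l + m - 1) : ℝ)

/-! With `p = (X² - 1)^l`, the left side is a multiple of `D^{l-m-1} p` and the right side a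
multiple of `D^{l+m+1} p`. These are linked by the classical identity
`(l+μ)! D^{l-μ} p = (l-μ)! (X² - 1)^μ D^{l+μ} p`, proved by induction on `μ`: at `μ + 1` the
difference of the two sides has derivative zero, by Legendre's equation for the derivatives of `p`
together with the identity at `μ`, and it vanishes at `1`, a root of `p` of multiplicity `l`.
For even `l - m`, `(2n)! = 2^n n! (2n-1)!!` turns `N_l^m` into `(-1)^m 2^l l! (l-m)! / (l+m)!`,
and the constants then match. -/

open Polynomial Nat

theorem Polynomial.iteratedDeriv_eval {𝕜 : Type*} [NontriviallyNormedField 𝕜] (p : 𝕜[X])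
    (n : ℕ) : iteratedDeriv n (fun x => p.eval x) = fun x => (derivative^[n] p).eval x := by
  induction n with
  | zero => simp
  | succ n ih =>
    funext x
    rw [iteratedDeriv_succ, ih, Function.iterate_succ_apply']
    exact Polynomial.deriv _

namespace Polynomial

variable {R : Type*} [CommRing R]

theorem X_sq_sub_one_mul_derivative_pow (l : ℕ) :
    (X ^ 2 - 1 : R[X]) * derivative ((X ^ 2 - 1) ^ l)
      = 2 * (l : R[X]) * X * (X ^ 2 - 1) ^ l := by
  cases l with
  | zero => simp
  | succ l =>
    simp only [derivative_pow_succ, derivative_sub, derivative_one,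
      derivative_X, map_add, map_natCast, map_one]
    push_cast
    ring

-- Legendre's equation for `D^{n} p`: the previous identity differentiated `n + 1` times.
theorem X_sq_sub_one_mul_iterate_derivative_pow (l n : ℕ) :
    (X ^ 2 - 1 : R[X]) * derivative^[n + 2] ((X ^ 2 - 1) ^ l)
      = 2 * ((l : R[X]) - (n : R[X]) - 1) * X * derivative^[n + 1] ((X ^ 2 - 1) ^ l)
        + ((n : R[X]) + 1) * (2 * (l : R[X]) - (n : R[X])) * derivative^[n] ((X ^ 2 - 1) ^ l) := by
  induction n with
  | zero =>
    have h := congrArg derivative (X_sq_sub_one_mul_derivative_pow (R := R) l)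
    simp only [derivative_mul, derivative_sub, derivative_X_pow, derivative_one, derivative_X,
      derivative_ofNat, derivative_natCast, Nat.cast_ofNat, map_ofNat] at h
    simp only [Function.iterate_succ_apply', Function.iterate_zero_apply]
    push_cast at h ⊢
    linear_combination h
  | succ n ih =>
    have h := congrArg derivative ih
    simp only [derivative_mul, derivative_add, derivative_sub, derivative_X_pow, derivative_one,
      derivative_X, derivative_ofNat, derivative_natCast, Nat.cast_ofNat, map_ofNat] at h
    simp only [Function.iterate_succ_apply'] at h ⊢
    push_cast at h ⊢
    linear_combination h

theorem isRoot_iterate_derivative_X_sq_sub_one_pow {l k : ℕ} (hk : k < l) :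
    (derivative^[k] ((X ^ 2 - 1 : R[X]) ^ l)).IsRoot 1 := by
  have hdvd : X - C 1 ∣ (X ^ 2 - 1 : R[X]) := ⟨X + 1, by simp only [map_one]; ring⟩
  exact dvd_iff_isRoot.mp <| (dvd_pow_self _ (by omega)).trans <|
    pow_sub_dvd_iterate_derivative_of_pow_dvd k (pow_dvd_pow_of_dvd hdvd l)

theorem factorial_mul_iterate_derivative_X_sq_sub_one_pow [IsAddTorsionFree R] {l μ : ℕ}
    (hμ : μ ≤ l) :
    ((l + μ)! : R[X]) * derivative^[l - μ] ((X ^ 2 - 1) ^ l)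
      = ((l - μ)! : R[X]) * (X ^ 2 - 1) ^ μ * derivative^[l + μ] ((X ^ 2 - 1) ^ l) := by
  induction μ with
  | zero => simp
  | succ μ ih =>
    obtain ⟨j, hj⟩ : ∃ j, l - (μ + 1) = j := ⟨_, rfl⟩
    have hj' : l - μ = j + 1 := by omega
    have ih := ih (by omega)
    rw [hj', factorial_succ] at ih
    rw [hj]
    set G : R[X] := ((l + (μ + 1))! : R[X]) * derivative^[j] ((X ^ 2 - 1) ^ l)
      - (j ! : R[X]) * (X ^ 2 - 1) ^ (μ + 1) * derivative^[l + (μ + 1)] ((X ^ 2 - 1) ^ l)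
    have hG_deriv : derivative G = 0 := by
      have hode := X_sq_sub_one_mul_iterate_derivative_pow (R := R) l (l + μ)
      have e1 : derivative (derivative^[j] ((X ^ 2 - 1 : R[X]) ^ l))
          = derivative^[j + 1] ((X ^ 2 - 1) ^ l) :=
        (Function.iterate_succ_apply' derivative _ _).symm
      have e2 : derivative (derivative^[l + (μ + 1)] ((X ^ 2 - 1 : R[X]) ^ l))
          = derivative^[l + μ + 2] ((X ^ 2 - 1) ^ l) :=
        (Function.iterate_succ_apply' derivative _ _).symm
      simp only [G, derivative_sub, derivative_mul, derivative_natCast, derivative_pow_succ,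
        derivative_one, derivative_X, e1, e2, map_add, map_natCast, map_one]
      rw [show l + (μ + 1) = l + μ + 1 from rfl, factorial_succ]
      obtain rfl : l = j + μ + 1 := by omega
      push_cast at ih hode ⊢
      linear_combination ((j : R[X]) + 2 * μ + 2) * ih - (j ! : R[X]) * (X ^ 2 - 1) ^ μ * hode
    have hG_one : G.eval 1 = 0 := by
      have hroot := isRoot_iterate_derivative_X_sq_sub_one_pow (R := R) (show j < l by omega)
      simp [G, hroot.eq_zero]
    have hG : G = 0 := by
      rw [eq_C_of_derivative_eq_zero hG_deriv, eval_C] at hG_one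
      rw [eq_C_of_derivative_eq_zero hG_deriv, hG_one, map_zero]
    exact sub_eq_zero.mp hG

end Polynomial

theorem Nat.factorial_two_mul (n : ℕ) : (2 * n)! = 2 ^ n * n ! * (2 * n - 1)‼ := by
  cases n with
  | zero => rfl
  | succ n =>
    rw [show 2 * (n + 1) = 2 * n + 1 + 1 by ring, factorial_eq_mul_doubleFactorial,
      show 2 * n + 1 + 1 = 2 * (n + 1) by ring, doubleFactorial_two_mul,
      show 2 * (n + 1) - 1 = 2 * n + 1 by omega]

theorem legendreNorm_eq_of_even {l m : ℕ} (hml : m ≤ l) (he : Even (l - m)) :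
    legendreNorm l m = (-1) ^ m * 2 ^ l * l ! * (l - m)! / (l + m)! := by
  obtain ⟨k, hk⟩ := he
  obtain rfl : l = (m + k) + k := by omega
  have hhalf : (m + k + k - m) / 2 = k := by omega
  have hsum : m + k + k + m = 2 * (m + k) := by ring
  have hchoose := add_choose_mul_factorial_mul_factorial (m + k) k
  have htwo := factorial_two_mul (m + k)
  have hk2 : m + k + k - m = 2 * k := by omega
  unfold legendreNorm
  rw [hhalf, hk2, doubleFactorial_two_mul, hsum, htwo, ← hchoose]
  have h1 : ((2 * (m + k) - 1)‼ : ℝ) ≠ 0 := by positivity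
  push_cast
  field_simp
  ring

theorem complLegendre_eq_eval (l ν : ℕ) (x : ℝ) :
    complLegendre l ν x
      = (-1) ^ l * (1 - x ^ 2) ^ ((ν : ℤ) - l)
          * (derivative^[ν] ((X ^ 2 - 1 : ℝ[X]) ^ l)).eval x := by
  have hfun : (fun t : ℝ => (1 - t ^ 2) ^ l)
      = fun t => (C ((-1 : ℝ) ^ l) * (X ^ 2 - 1) ^ l).eval t := by
    funext t
    simp only [eval_mul, eval_C, eval_pow, eval_sub, eval_X, eval_one, ← mul_pow]
    ring
  rw [complLegendre, hfun, iteratedDeriv_eval, iterate_derivative_C_mul]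
  simp only [eval_mul, eval_C]
  ring

theorem assocLegendreP_eq_eval (l m : ℕ) (x : ℝ) :
    assocLegendreP l m x
      = (-1) ^ m / (2 ^ l * l !) * (derivative^[l + m] ((X ^ 2 - 1 : ℝ[X]) ^ l)).eval x := by
  have hfun : legendreP l
      = fun t => (C (1 / (2 ^ l * l ! : ℝ)) * derivative^[l] ((X ^ 2 - 1) ^ l)).eval t := by
    funext t
    have hpow : (fun t : ℝ => (t ^ 2 - 1) ^ l) = fun t => ((X ^ 2 - 1 : ℝ[X]) ^ l).eval t := by
      simp
    rw [legendreP, hpow, iteratedDeriv_eval, eval_mul, eval_C]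
  rw [assocLegendreP, hfun, iteratedDeriv_eval, iterate_derivative_C_mul,
    ← Function.iterate_add_apply, add_comm m l]
  simp only [eval_mul, eval_C]
  ring

theorem complLegendre_normalization_odd (l m : ℕ) (hm : m < l) (he : Even (l - m))
    (x : ℝ) (hx : x ^ 2 ≠ 1) :
    complLegendre l (l - m - 1) x
      = (legendreNorm l m / (((l : ℝ) - m) * ((l : ℝ) + m + 1)))
          * assocLegendreP l (m + 1) x := by
  have hE := congrArg (eval x)
    (factorial_mul_iterate_derivative_X_sq_sub_one_pow (R := ℝ) (show m + 1 ≤ l by omega))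
  rw [complLegendre_eq_eval, assocLegendreP_eq_eval, legendreNorm_eq_of_even hm.le he]
  obtain ⟨k, rfl⟩ := Nat.exists_eq_add_of_lt hm
  rw [show m + k + 1 - m = k + 1 by omega] at he
  have hsign : (-1 : ℝ) ^ (m + k + 1) = (-1) ^ m := by
    rw [add_assoc, pow_add, he.neg_one_pow, mul_one]
  have hexp : ((m + k + 1 - m - 1 : ℕ) : ℤ) - (m + k + 1 : ℕ) = -((m + 1 : ℕ) : ℤ) := by
    omega
  rw [hsign, hexp, zpow_neg, zpow_natCast, show m + k + 1 - m - 1 = k by omega,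
    show m + k + 1 - m = k + 1 by omega, factorial_succ k,
    show m + k + 1 + (m + 1) = (m + k + 1 + m) + 1 from rfl]
  rw [show m + k + 1 - (m + 1) = k by omega,
    show m + k + 1 + (m + 1) = (m + k + 1 + m) + 1 from rfl, factorial_succ (m + k + 1 + m)] at hE
  simp only [eval_mul, eval_natCast, eval_pow, eval_sub, eval_X, eval_one] at hE
  rw [show x ^ 2 - 1 = -(1 - x ^ 2) by ring, neg_pow] at hE
  have h1x : (1 - x ^ 2 : ℝ) ≠ 0 := sub_ne_zero.mpr hx.symm
  push_cast at hE ⊢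
  rw [show (m : ℝ) + k + 1 - m = k + 1 by ring]
  field_simp
  linear_combination hE
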